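/- Let A = ⟨{a},b,Q,δ,q₀,F⟩ be an ω-1GNPT and let A′ = ⟨{a},Q,δ′,q₀,F⟩ be the 1APW with δ′(q,a) = ⋁_{P ⊆ Q with is_mother_A(q,P)} ⋀_{q′ ∈ P} q′. Then L(A) = ∅ if and only if L(A′) = ∅. -/

import Mathlib

/-- `CardGT s n`: the set `s` has more than `n` elements. -/
def CardGT {α : Type*} (s : Set α) (n : ℕ) : Prop :=
  ∃ t : Finset α, ↑t ⊆ s ∧ n < t.card

/-- `CardLE s n`: the set `s` has at most `n` elements. -/
def CardLE {α : Type*} (s : Set α) (n : ℕ) : Prop :=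
  ∃ t : Finset α, s ⊆ ↑t ∧ t.card ≤ n
/-! ### Forests and trees of nodes (nonempty finite words over ℕ) -/

/-- Nodes of forests: finite words over ℕ (the forest condition requires nonemptiness). -/
abbrev Node := List ℕ

/-- `y` is a child (successor) of `x`: `y = x·c` for some `c ∈ ℕ`. -/
def IsChild (x y : Node) : Prop := ∃ c : ℕ, y = x ++ [c]

/-- A forest: a set of nonempty words over ℕ closed under nonempty prefixes. -/
def IsForest (F : Set Node) : Prop :=
  (∀ x ∈ F, x ≠ []) ∧ (∀ x y : Node, y ∈ F → IsChild x y → x ≠ [] → x ∈ F)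

/-- The roots of a forest are its length-one elements. -/
def IsRootNode (x : Node) : Prop := x.length = 1

/-- A tree: a nonempty forest all of whose elements start with the same letter. -/
def IsTree (T : Set Node) : Prop :=
  IsForest T ∧ T.Nonempty ∧ ∃ c : ℕ, ∀ x ∈ T, x.head? = some c
/-! ### Fully enriched automata and two-way graded alternating parity tree automata -/

/-- Positive Boolean formulas over atoms of type `X`. -/
inductive PosBool (X : Type) where
  | tru
  | fls
  | atom (x : X)
  | and (f g : PosBool X)
  | or (f g : PosBool X)

namespace PosBool

variable {X : Type}

/-- A set of atoms satisfies a positive Boolean formula. -/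
def sats (S : Set X) : PosBool X → Prop
  | .tru => True
  | .fls => False
  | .atom x => x ∈ S
  | .and f g => f.sats S ∧ g.sats S
  | .or f g => f.sats S ∨ g.sats S

/-- All atoms occurring in a positive Boolean formula satisfy `p`. -/
def All (p : X → Prop) : PosBool X → Prop
  | .tru => True
  | .fls => True
  | .atom x => p x
  | .and f g => f.All p ∧ g.All p
  | .or f g => f.All p ∧ g.All p

end PosBool

/-- Moves of a fully enriched automaton: `⟨n⟩`, `[n]`, `−1`, `ε`, `⟨root⟩`, `[root]`. -/
inductive Mv where
  | dia (n : ℕ)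
  | box (n : ℕ)
  | up
  | stay
  | someRoot
  | allRoots

/-- The counting parameter of a move is bounded by `b`. -/
def Mv.Bounded (b : ℕ) : Mv → Prop
  | .dia n => n ≤ b
  | .box n => n ≤ b
  | _ => True

/-- Two-way moves (no jumps to roots): the moves in `D_b⁻`. -/
def Mv.TwoWay : Mv → Prop
  | .someRoot => False
  | .allRoots => False
  | _ => True

/-- A fully enriched automaton (FEA) over the alphabet `A` with state type `Q`:
counting bound `b > 0`, transition function `δ : Q × A → B⁺(D_b × Q)`, initial state,
and a parity condition `F₁ ⊆ … ⊆ F_k = Q` of index `k`. -/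
structure FEA (A Q : Type) where
  finQ : Finite Q
  b : ℕ
  hb : 0 < b
  δ : Q → A → PosBool (Mv × Q)
  hδ : ∀ q a, (δ q a).All (fun m => m.1.Bounded b)
  init : Q
  k : ℕ
  hk : 0 < k
  F : Fin k → Set Q
  Fmono : Monotone F
  Flast : ∀ (q : Q) (h : k - 1 < k), q ∈ F ⟨k - 1, h⟩

/-- The roots of a forest. -/
def rootsOf (F : Set Node) : Set Node := {x ∈ F | x.length = 1}

/-- Executing a single atom `(d, s)` of a transition at the run node `y`
(currently reading the input node `x`). -/
def ExecOK {Q : Type} (Fo : Set Node) (Tr : Set Node) (r : Node → Node × Q)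
    (y x : Node) : Mv × Q → Prop
  | (.stay, s) => ∃ j : ℕ, y ++ [j] ∈ Tr ∧ r (y ++ [j]) = (x, s)
  | (.up, s) => 1 < x.length ∧ ∃ j : ℕ, y ++ [j] ∈ Tr ∧ r (y ++ [j]) = (x.dropLast, s)
  | (.dia n, s) => ∃ M : Finset ℕ, M.card = n + 1 ∧
      ∀ c ∈ M, x ++ [c] ∈ Fo ∧ ∃ j : ℕ, y ++ [j] ∈ Tr ∧ r (y ++ [j]) = (x ++ [c], s)
  | (.box n, s) => ∃ M : Finset ℕ, M.card ≤ n ∧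
      ∀ c : ℕ, x ++ [c] ∈ Fo → c ∉ M →
        ∃ j : ℕ, y ++ [j] ∈ Tr ∧ r (y ++ [j]) = (x ++ [c], s)
  | (.someRoot, s) => ∃ cr ∈ rootsOf Fo, ∃ j : ℕ, y ++ [j] ∈ Tr ∧ r (y ++ [j]) = (cr, s)
  | (.allRoots, s) => ∀ cr ∈ rootsOf Fo, ∃ j : ℕ, y ++ [j] ∈ Tr ∧ r (y ++ [j]) = (cr, s)

/-- A run `⟨T_r, r⟩` of a FEA on the labeled forest `⟨Fo, V⟩`. -/
structure FEA.IsRun {A Q : Type} (M : FEA A Q) (Fo : Set Node) (V : Node → A)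
    (Tr : Set Node) (r : Node → Node × Q) : Prop where
  tree : IsTree Tr
  start : ∀ z ∈ Tr, z.length = 1 → (r z).1 ∈ rootsOf Fo ∧ (r z).2 = M.init
  step : ∀ y ∈ Tr, ∃ S : Set (Mv × Q),
      (M.δ (r y).2 (V (r y).1)).sats S ∧ ∀ ds ∈ S, ExecOK Fo Tr r y (r y).1 ds

/-- An infinite path of the tree `Tr` starting at its root. -/
def IsInfPath (Tr : Set Node) (p : ℕ → Node) : Prop :=
  p 0 ∈ Tr ∧ (p 0).length = 1 ∧ ∀ i : ℕ, p (i + 1) ∈ Tr ∧ IsChild (p i) (p (i + 1))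

/-- `ParityOK k F I`: the minimal (1-based) index `i` with `I ∩ F_i ≠ ∅` is even
(the zero-based index is odd). -/
def ParityOK {Q : Type} (k : ℕ) (F : Fin k → Set Q) (I : Set Q) : Prop :=
  ∃ j : Fin k, (I ∩ F j).Nonempty ∧ Odd j.val ∧
    ∀ j' : Fin k, (I ∩ F j').Nonempty → j ≤ j'

/-- The set of states occurring infinitely often along a path of a run. -/
def InfStates {Q : Type} (r : Node → Node × Q) (p : ℕ → Node) : Set Q :=
  {q | ∀ n : ℕ, ∃ i : ℕ, n ≤ i ∧ (r (p i)).2 = q}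

/-- Acceptance of a labeled forest by a FEA. -/
def FEA.Accepts {A Q : Type} (M : FEA A Q) (Fo : Set Node) (V : Node → A) : Prop :=
  ∃ (Tr : Set Node) (r : Node → Node × Q),
    M.IsRun Fo V Tr r ∧
    ∀ p : ℕ → Node, IsInfPath Tr p → ParityOK M.k M.F (InfStates r p)

/-- A two-way graded alternating parity tree automaton (2GAPT): a FEA that runs on
trees and uses only the moves in `D_b⁻` (no jumps to roots). -/
structure GAPT2 (A Q : Type) extends FEA A Q where
  htw : ∀ q a, (δ q a).All (fun m => m.1.TwoWay)

/-- Acceptance of a labeled tree by a 2GAPT (a tree being a forest with a single root,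
the run conditions are those of FEAs). -/
def GAPT2.Accepts {A Q : Type} (M : GAPT2 A Q) (T : Set Node) (V : Node → A) : Prop :=
  M.toFEA.Accepts T V
/-! ### Graded nondeterministic parity tree automata (GNPTs) -/

/-- Boolean formulas over variables of type `Y`. -/
inductive BForm (Y : Type) where
  | tru
  | fls
  | var (y : Y)
  | not (f : BForm Y)
  | and (f g : BForm Y)
  | or (f g : BForm Y)

/-- A subset of `Y` (a letter of `2^Y`) satisfies a Boolean formula. -/
def BForm.holds {Y : Type} (s : Set Y) : BForm Y → Prop
  | .tru => True
  | .fls => False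
  | .var y => y ∈ s
  | .not f => ¬ f.holds s
  | .and f g => f.holds s ∧ g.holds s
  | .or f g => f.holds s ∨ g.holds s

/-- A constraint pair `⟨θ, ξ⟩`: a Boolean formula together with a bound
`(>, n)` (encoded `(true, n)`) or `(≤, n)` (encoded `(false, n)`). -/
abbrev CPair (Y : Type) := BForm Y × Bool × ℕ

/-- A `b`-counting constraint: a finite set (list) of constraint pairs. -/
abbrev CConstr (Y : Type) := List (CPair Y)

/-- A word, given by an index set `I` and letters `f i ∈ 2^Y` for `i ∈ I`,
satisfies a constraint pair. (Only the number of occurrences of letters satisfying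
`θ` matters, not their order.) -/
def CPairSat {ι Y : Type} (I : Set ι) (f : ι → Set Y) : CPair Y → Prop
  | (θ, true, n) => CardGT {i ∈ I | θ.holds (f i)} n
  | (θ, false, n) => CardLE {i ∈ I | θ.holds (f i)} n

/-- A word satisfies a counting constraint if it satisfies every pair in it. -/
def CSat {ι Y : Type} (I : Set ι) (f : ι → Set Y) (C : CConstr Y) : Prop :=
  ∀ p ∈ C, CPairSat I f p

/-- A graded nondeterministic parity tree automaton (GNPT) over the alphabet `A`:
the states form a finite set `Q ⊆ 2^Y` for a finite variable set `Y`, the transition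
function maps a state and a letter to a `b`-counting constraint of cardinality at most
`log |Q|`, and acceptance is by a parity condition `F₁ ⊆ … ⊆ F_k`. -/
structure GNPT (A Y : Type) where
  finY : Finite Y
  b : ℕ
  Q : Set (Set Y)
  finQ : Q.Finite
  δ : Set Y → A → CConstr Y
  hb : ∀ q ∈ Q, ∀ a, ∀ p ∈ δ q a, p.2.2 ≤ b
  hsize : ∀ q ∈ Q, ∀ a, (δ q a).length ≤ Nat.log 2 (Nat.card Q)
  init : Set Y
  hinit : init ∈ Q
  k : ℕ
  F : Fin k → Set (Set Y)
  Fmono : Monotone F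

namespace GNPT

variable {A Y : Type}

/-- A run of a GNPT on a labeled tree `⟨T, V⟩`: a `Q`-labeling `r` of the same tree `T`
such that the root is labeled by the initial state and, at every node, the word of
labels of its successors satisfies the corresponding counting constraint. -/
def IsRun (M : GNPT A Y) (T : Set Node) (V : Node → A) (r : Node → Set Y) : Prop :=
  (∀ x ∈ T, r x ∈ M.Q) ∧
  (∀ x ∈ T, x.length = 1 → r x = M.init) ∧
  ∀ x ∈ T, CSat {c : ℕ | x ++ [c] ∈ T} (fun c => r (x ++ [c])) (M.δ (r x) (V x))

/-- Acceptance of a labeled tree by a GNPT. -/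
def Accepts (M : GNPT A Y) (T : Set Node) (V : Node → A) : Prop :=
  ∃ r : Node → Set Y, M.IsRun T V r ∧
    ∀ p : ℕ → Node, IsInfPath T p →
      ParityOK M.k M.F {s | ∀ n : ℕ, ∃ i : ℕ, n ≤ i ∧ r (p i) = s}

/-- The language of a GNPT is empty: it accepts no labeled tree. -/
def LEmpty (M : GNPT A Y) : Prop :=
  ¬ ∃ (T : Set Node) (V : Node → A), IsTree T ∧ M.Accepts T V

/-- A `Forall` GNPT: every transition requires all successors to carry one
designated state. -/
def IsForall (M : GNPT A Y) : Prop :=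
  ∀ q ∈ M.Q, ∀ a : A, ∃ q' ∈ M.Q, ∃ θ : BForm Y,
    (∀ s : Set Y, θ.holds s ↔ s = q') ∧ M.δ q a = [(θ.not, false, 0)]

/-- A `Safety` GNPT: there is no acceptance condition, i.e. the parity condition
accepts every infinite path. -/
def IsSafety (M : GNPT A Y) : Prop :=
  ∀ I : Set (Set Y), I.Nonempty → ParityOK M.k M.F I

end GNPT
/-- The full ω-tree: the infinitely branching tree (rooted at `[0]`) in which every
node has a successor for every natural number. -/
def omegaTree : Set Node := {x : Node | x ≠ [] ∧ x.head? = some 0}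
/-! ### `is_mother` and single-alphabet alternating parity word automata (1APWs) -/

/-- `is_mother_A(q, P)` for an ω-1GNPT `A`: some infinite word over `P` satisfies the
counting constraint `δ(q, a)`. -/
def GNPT.IsMother {Y : Type} (M : GNPT Unit Y) (q : Set Y) (P : Set (Set Y)) : Prop :=
  ∃ t : ℕ → Set Y, (∀ i : ℕ, t i ∈ P) ∧
    CSat (Set.univ : Set ℕ) t (M.δ q ())

/-- A run of a 1APW (given by its transition function `δ` and initial state `q₀`) on
its unique input `aaa⋯`: a `Q`-labeled tree in which the root is labeled `q₀` and the
set of labels of the children of each node satisfies the transition formula. -/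
def APWRun {Q : Type} (δ : Q → PosBool Q) (q₀ : Q)
    (Tr : Set Node) (r : Node → Q) : Prop :=
  IsTree Tr ∧
  (∀ z ∈ Tr, z.length = 1 → r z = q₀) ∧
  ∀ y ∈ Tr, ∃ S : Set Q, (δ (r y)).sats S ∧
    ∀ q ∈ S, ∃ j : ℕ, y ++ [j] ∈ Tr ∧ r (y ++ [j]) = q

/-- Nonemptiness of a 1APW with transition function `δ`, initial state `q₀` and parity
condition `F₁ ⊆ … ⊆ F_k`: there is an accepting run on the unique input `aaa⋯`. -/
def APWNonempty {Q : Type} (δ : Q → PosBool Q) (q₀ : Q) (k : ℕ)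
    (F : Fin k → Set Q) : Prop :=
  ∃ (Tr : Set Node) (r : Node → Q), APWRun δ q₀ Tr r ∧
    ∀ p : ℕ → Node, IsInfPath Tr p →
      ParityOK k F {q | ∀ n : ℕ, ∃ i : ℕ, n ≤ i ∧ r (p i) = q}

/-- The satisfaction characterization of the transition formula
`δ′(q, a) = ⋁_{P ⊆ Q, is_mother_A(q,P)} ⋀_{q′ ∈ P} q′` of the 1APW associated with an
ω-1GNPT: a set of states satisfies it iff it contains a set `P` with
`is_mother_A(q, P)`. -/
def MotherTransition {Y : Type} (M : GNPT Unit Y)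
    (δ' : {s : Set Y // s ∈ M.Q} → PosBool {s : Set Y // s ∈ M.Q}) : Prop :=
  ∀ (q : {s : Set Y // s ∈ M.Q}) (S : Set {s : Set Y // s ∈ M.Q}),
    (δ' q).sats S ↔
      ∃ P : Set (Set Y), P ⊆ M.Q ∧ M.IsMother q.val P ∧
        ∀ (s : Set Y) (hs : s ∈ M.Q), s ∈ P → (⟨s, hs⟩ : {s : Set Y // s ∈ M.Q}) ∈ S

/-! An ω-1GNPT reads only the full ω-tree, so an accepting run of it is itself an accepting run
tree of the 1APW: the labels of the children of every node form a word witnessing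
`is_mother`. Conversely, from an accepting run tree of the 1APW we choose, at every node, a
word witnessing `is_mother` and, for each of its letters, a child carrying it; following these
choices from the root embeds the ω-tree into the run tree, and pulling the labels back along
this embedding gives a run of the ω-1GNPT. Every path of the ω-tree is mapped onto a path of
the run tree with the same labels, so the parity condition transfers in both directions. -/

section Trees

lemma mem_omegaTree_append {x : Node} (hx : x ∈ omegaTree) (c : ℕ) : x ++ [c] ∈ omegaTree := by
  obtain ⟨hne, hhd⟩ := hx
  exact ⟨by simp, by rwa [List.head?_append_of_ne_nil _ hne]⟩

lemma setOf_append_mem_omegaTree {x : Node} (hx : x ∈ omegaTree) :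
    {c : ℕ | x ++ [c] ∈ omegaTree} = Set.univ :=
  Set.eq_univ_of_forall (mem_omegaTree_append hx)

lemma omegaTree_isTree : IsTree omegaTree := by
  refine ⟨⟨fun x hx => hx.1, ?_⟩, ⟨[0], by simp [omegaTree]⟩, 0, fun x hx => hx.2⟩
  rintro x y ⟨-, hy⟩ ⟨c, rfl⟩ hx
  exact ⟨hx, by rwa [List.head?_append_of_ne_nil _ hx] at hy⟩

lemma eq_root_of_mem_omegaTree {x : Node} (hx : x ∈ omegaTree) (h : x.length = 1) :
    x = [0] := by
  obtain ⟨a, rfl⟩ := List.length_eq_one_iff.mp h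
  simpa [omegaTree] using hx

lemma IsTree.exists_root {T : Set Node} (hT : IsTree T) : ∃ x ∈ T, x.length = 1 := by
  obtain ⟨⟨hne, hcl⟩, ⟨z, hz⟩, -⟩ := hT
  obtain ⟨a, l, rfl⟩ := List.exists_cons_of_ne_nil (hne z hz)
  refine ⟨[a], ?_, rfl⟩
  induction l using List.reverseRecOn with
  | nil => exact hz
  | append_singleton l c ih => exact ih (hcl (a :: l) _ hz ⟨c, rfl⟩ (List.cons_ne_nil a l))

lemma IsInfPath.mem {T : Set Node} {p : ℕ → Node} (hp : IsInfPath T p) : ∀ i, p i ∈ T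
  | 0 => hp.1
  | i + 1 => (hp.2.2 i).1

end Trees

section Unfolding

/-- The node `0 c₁ ⋯ cₙ` of the ω-tree is sent to the node reached from `rt` by descending,
for `i = 1, …, n`, from the current node `y` to its child `y ++ [st y cᵢ]`. -/
def unfoldAlong (rt : Node) (st : Node → ℕ → ℕ) (x : Node) : Node :=
  x.tail.reverse.foldr (fun c y => y ++ [st y c]) rt

variable {T : Set Node} {rt : Node} {st : Node → ℕ → ℕ}

lemma unfoldAlong_root : unfoldAlong rt st [0] = rt := rfl

lemma unfoldAlong_append {x : Node} (hx : x ≠ []) (c : ℕ) :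
    unfoldAlong rt st (x ++ [c]) = unfoldAlong rt st x ++ [st (unfoldAlong rt st x) c] := by
  obtain ⟨a, l, rfl⟩ := List.exists_cons_of_ne_nil hx
  simp [unfoldAlong]

lemma unfoldAlong_mem (hrt : rt ∈ T) (hst : ∀ y ∈ T, ∀ c, y ++ [st y c] ∈ T) (x : Node) :
    unfoldAlong rt st x ∈ T := by
  unfold unfoldAlong
  induction x.tail.reverse with
  | nil => exact hrt
  | cons c l ih => exact hst _ ih c

lemma isInfPath_unfoldAlong (hrt : rt ∈ T) (hrt₁ : rt.length = 1)
    (hst : ∀ y ∈ T, ∀ c, y ++ [st y c] ∈ T) {p : ℕ → Node} (hp : IsInfPath omegaTree p) :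
    IsInfPath T (unfoldAlong rt st ∘ p) := by
  have hp₀ : p 0 = [0] := eq_root_of_mem_omegaTree hp.1 hp.2.1
  refine ⟨by simpa [hp₀, unfoldAlong_root] using hrt, by simpa [hp₀, unfoldAlong_root] using hrt₁,
    fun i => ?_⟩
  obtain ⟨c, hc⟩ := (hp.2.2 i).2
  refine ⟨unfoldAlong_mem hrt hst _, st (unfoldAlong rt st (p i)) c, ?_⟩
  simp only [Function.comp_apply, hc, unfoldAlong_append (hp.mem i).1]

end Unfolding

section Parity

def infOften {α : Type*} (u : ℕ → α) : Set α := {a | ∀ n, ∃ i, n ≤ i ∧ u i = a}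

lemma infOften_comp {α β : Type*} {f : α → β} (hf : Function.Injective f) (u : ℕ → α) :
    infOften (f ∘ u) = f '' infOften u := by
  ext b
  constructor
  · intro hb
    obtain ⟨i, -, rfl⟩ := hb 0
    refine ⟨u i, fun n => ?_, rfl⟩
    obtain ⟨j, hj, he⟩ := hb n
    exact ⟨j, hj, hf he⟩
  · rintro ⟨a, ha, rfl⟩ n
    obtain ⟨i, hi, rfl⟩ := ha n
    exact ⟨i, hi, rfl⟩

lemma parityOK_preimage_iff {α β : Type} {k : ℕ} (F : Fin k → Set β) (f : α → β)
    (I : Set α) : ParityOK k (fun j => f ⁻¹' F j) I ↔ ParityOK k F (f '' I) := by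
  simp only [ParityOK, ← Set.image_inter_nonempty_iff]

lemma parityOK_infOften_subtype_iff {β : Type} {Q : Set β} {k : ℕ} (F : Fin k → Set β)
    (u : ℕ → Q) :
    ParityOK k (fun j => {s : Q | s.val ∈ F j}) (infOften u) ↔
      ParityOK k F (infOften (Subtype.val ∘ u)) := by
  rw [infOften_comp Subtype.val_injective, ← parityOK_preimage_iff]
  rfl

end Parity

lemma exists_subtype_eq_on {α β : Type*} {T : Set α} {Q : Set β} [Nonempty Q] {r : α → β}
    (h : ∀ x ∈ T, r x ∈ Q) : ∃ r' : α → Q, ∀ x ∈ T, (r' x).val = r x := by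
  classical
  exact ⟨fun x => if hx : x ∈ T then ⟨r x, h x hx⟩ else Classical.arbitrary Q,
    fun x hx => by simp [hx]⟩

namespace GNPT

variable {Y : Type} {M : GNPT Unit Y} {δ' : M.Q → PosBool M.Q}

lemma IsRun.isMother_children {r : Node → Set Y} (hr : M.IsRun omegaTree (fun _ => ()) r)
    {x : Node} (hx : x ∈ omegaTree) :
    M.IsMother (r x) (Set.range fun c => r (x ++ [c])) := by
  refine ⟨fun c => r (x ++ [c]), fun c => ⟨c, rfl⟩, ?_⟩
  simpa only [setOf_append_mem_omegaTree hx] using hr.2.2 x hx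

lemma apwNonempty_of_accepts (hδ' : MotherTransition M δ')
    (h : M.Accepts omegaTree fun _ => ()) :
    APWNonempty δ' ⟨M.init, M.hinit⟩ M.k (fun j => {s : M.Q | s.val ∈ M.F j}) := by
  obtain ⟨r, hrun, hacc⟩ := h
  have : Nonempty M.Q := ⟨⟨M.init, M.hinit⟩⟩
  obtain ⟨r', hr'⟩ := exists_subtype_eq_on hrun.1
  refine ⟨omegaTree, r', ⟨omegaTree_isTree, fun z hz hz₁ => ?_, fun y hy => ?_⟩, fun p hp => ?_⟩
  · exact Subtype.ext ((hr' z hz).trans (hrun.2.1 z hz hz₁))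
  · refine ⟨Set.range fun c => r' (y ++ [c]), ?_, ?_⟩
    · rw [hδ']
      refine ⟨Set.range fun c => r (y ++ [c]), ?_, ?_, ?_⟩
      · rintro _ ⟨c, rfl⟩
        exact hrun.1 _ (mem_omegaTree_append hy c)
      · simpa only [hr' y hy] using hrun.isMother_children hy
      · rintro s - ⟨c, rfl⟩
        exact ⟨c, Subtype.ext (hr' _ (mem_omegaTree_append hy c))⟩
    · rintro _ ⟨c, rfl⟩
      exact ⟨c, mem_omegaTree_append hy c, rfl⟩
  · refine (parityOK_infOften_subtype_iff M.F (r' ∘ p)).2 ?_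
    have hlabels : Subtype.val ∘ r' ∘ p = r ∘ p := funext fun i => hr' _ (hp.mem i)
    exact hlabels ▸ hacc p hp

lemma exists_mother_word_children {Tr : Set Node} {r' : Node → M.Q} {q₀ : M.Q}
    (hδ' : MotherTransition M δ') (hrun : APWRun δ' q₀ Tr r') {y : Node} (hy : y ∈ Tr) :
    ∃ t : ℕ → Set Y, CSat Set.univ t (M.δ (r' y).val ()) ∧
      ∀ c, ∃ j, y ++ [j] ∈ Tr ∧ (r' (y ++ [j])).val = t c := by
  obtain ⟨S, hS, hchildren⟩ := hrun.2.2 y hy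
  obtain ⟨P, hPQ, ⟨t, htP, ht⟩, hPS⟩ := (hδ' _ S).1 hS
  refine ⟨t, ht, fun c => ?_⟩
  obtain ⟨j, hj, hjlabel⟩ := hchildren _ (hPS _ (hPQ (htP c)) (htP c))
  exact ⟨j, hj, by rw [hjlabel]⟩

lemma accepts_of_apwNonempty (hδ' : MotherTransition M δ')
    (h : APWNonempty δ' ⟨M.init, M.hinit⟩ M.k (fun j => {s : M.Q | s.val ∈ M.F j})) :
    M.Accepts omegaTree fun _ => () := by
  obtain ⟨Tr, r', hrun, hacc⟩ := h
  obtain ⟨rt, hrt, hrt₁⟩ := hrun.1.exists_root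
  choose! t ht hchildren using fun y (hy : y ∈ Tr) => exists_mother_word_children hδ' hrun hy
  choose! st hst hstlabel using hchildren
  have hmem := unfoldAlong_mem hrt hst
  refine ⟨fun x => (r' (unfoldAlong rt st x)).val,
    ⟨fun x _ => (r' _).2, fun x hx hx₁ => ?_, fun x hx => ?_⟩, fun p hp => ?_⟩
  · change (r' (unfoldAlong rt st x)).val = M.init
    rw [eq_root_of_mem_omegaTree hx hx₁, unfoldAlong_root, hrun.2.1 rt hrt hrt₁]
  · have hlabels : (fun c => (r' (unfoldAlong rt st (x ++ [c]))).val) = t (unfoldAlong rt st x) :=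
      funext fun c => by rw [unfoldAlong_append hx.1, hstlabel _ (hmem x)]
    simpa only [setOf_append_mem_omegaTree hx, hlabels] using ht _ (hmem x)
  · exact (parityOK_infOften_subtype_iff M.F _).1 (hacc _ (isInfPath_unfoldAlong hrt hrt₁ hst hp))

end GNPT

/-- **Lemma 7.** Let `A` be an ω-1GNPT and let `A'` be the 1APW with the same states,
initial state and acceptance condition whose transition function is
`δ′(q, a) = ⋁_{P ⊆ Q, is_mother_A(q,P)} ⋀_{q′ ∈ P} q′`. Then `L(A) = ∅` iff
`L(A') = ∅`. -/
theorem omega_gnpt_to_apw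
    {Y : Type} (M : GNPT Unit Y)
    (δ' : {s : Set Y // s ∈ M.Q} → PosBool {s : Set Y // s ∈ M.Q})
    (hδ' : MotherTransition M δ') :
    (¬ M.Accepts omegaTree (fun _ => ())) ↔
      ¬ APWNonempty δ' ⟨M.init, M.hinit⟩ M.k
          (fun j => {s : {s : Set Y // s ∈ M.Q} | s.val ∈ M.F j}) :=
  not_congr ⟨GNPT.apwNonempty_of_accepts hδ', GNPT.accepts_of_apwNonempty hδ'⟩
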